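/- arXiv:2206.10308 — 2 statements merged into one kernel-verified Lean document; each statement's English description precedes it below -/
import Mathlib

section
/- Let (P_n)_{n≥0} be a monic OPS with recurrence coefficients (B_n), (C_n), and suppose there exist a, c ∈ ℂ and complex sequences (a_n)_{n≥0}, (b_n)_{n≥0}, (c_n)_{n≥0} with c_0 = 0 such that (a·X − c)·S_q P_n = (a_n·X + b_n)·P_n + c_n·P_{n−1} for all n ≥ 0. Set t_n = c_n/C_n and r_n = t_n + a_n − a_{n−1} for n ≥ 1. Then for every n ≥ 3: r_n·(B_n² − 2α B_n B_{n−1} + B_{n−1}²) = (r_{n+1} + r_{n+2})·(C_{n+1} − 1/4) − 2(1 + α)·r_n·(C_n − 1/4) + (r_{n−1} + r_{n−2})·(C_{n−1} − 1/4). -/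
/-!
The points `x₊(z)` and `x₋(z)` are the roots of `T² - 2α x(z) T + x(z)² + α² - 1`, so the averaging
operator satisfies `S_q(X² f) = 2α X S_q(X f) - (X² + α² - 1) S_q f`. Take `f = P_n`, expand `X P_n`
and `X² P_n` by the three-term recurrence and multiply by `aX - c`: the structure relation turns this
into a vanishing combination of `P_{n-3}, …, P_{n+3}`, whose coefficients must all vanish. The top and
bottom ones say that `a_n` and `t_n` satisfy `u_{n-1} - 2α u_n + u_{n+1} = 0`, hence so does `r_n`.
The coefficient of `P_{n-1}` in the relation for `n` and that of `P_n` in the relation for `n - 1`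
contain the `b_n` in the same combination; their difference is a three-term identity for `r_n`, and
the recurrence for `r_n` turns it into the claim.
-/

noncomputable section

/-- Real power `q ^ r` (with `q > 0` in applications), coerced into `ℂ`. -/
def rp (q : ℝ) (r : ℝ) : ℂ := ((q ^ r : ℝ) : ℂ)

/-- The lattice point `x(z) = (z + z⁻¹)/2`. -/
def xl (z : ℂ) : ℂ := (z + z⁻¹) / 2

/-- `x₊(z) = (q^{1/2} z + q^{-1/2} z⁻¹)/2`. -/
def xp (q : ℝ) (z : ℂ) : ℂ := (rp q (1/2) * z + rp q (-(1/2)) * z⁻¹) / 2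

/-- `x₋(z) = (q^{-1/2} z + q^{1/2} z⁻¹)/2`. -/
def xm (q : ℝ) (z : ℂ) : ℂ := (rp q (-(1/2)) * z + rp q (1/2) * z⁻¹) / 2

/-- `IsSq q f g` means `g = S_q f`, i.e. `g` satisfies the defining property of the
averaging operator applied to `f`. -/
def IsSq (q : ℝ) (f g : Polynomial ℂ) : Prop :=
  ∀ z : ℂ, z ≠ 0 → Polynomial.eval (xl z) g =
    (Polynomial.eval (xp q z) f + Polynomial.eval (xm q z) f) / 2

/-- `IsDq q f g` means `g = D_q f`, i.e. `g` satisfies the defining property of the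
Askey-Wilson operator applied to `f`. -/
def IsDq (q : ℝ) (f g : Polynomial ℂ) : Prop :=
  ∀ z : ℂ, z ≠ 0 → Polynomial.eval (xl z) g * (xp q z - xm q z) =
    Polynomial.eval (xp q z) f - Polynomial.eval (xm q z) f

/-- `α = (q^{1/2} + q^{-1/2})/2`. -/
def alphaC (q : ℝ) : ℂ := (rp q (1/2) + rp q (-(1/2))) / 2

/-- `α_n = (q^{n/2} + q^{-n/2})/2`. -/
def alphaN (q : ℝ) (n : ℕ) : ℂ := (rp q ((n : ℝ)/2) + rp q (-((n : ℝ)/2))) / 2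

/-- `γ_n = (q^{n/2} - q^{-n/2})/(q^{1/2} - q^{-1/2})`. -/
def gammaN (q : ℝ) (n : ℕ) : ℂ :=
  (rp q ((n : ℝ)/2) - rp q (-((n : ℝ)/2))) / (rp q (1/2) - rp q (-(1/2)))

/-- The monic Chebyshev polynomials of the first kind. -/
def chebM (n : ℕ) : Polynomial ℂ :=
  if n = 0 then 1 else (2 : ℂ) ^ (1 - (n : ℤ)) • Polynomial.Chebyshev.T ℂ (n : ℤ)

end


open Polynomial

section Jacobi

variable {R : Type*} [CommRing R]

noncomputable def jacobi (B C : ℕ → R) (f : ℕ → R[X]) (n : ℕ) : R[X] :=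
  f (n + 1) + B n • f n + C n • f (n - 1)

lemma mul_jacobi (B C : ℕ → R) (p : R[X]) (f : ℕ → R[X]) (n : ℕ) :
    p * jacobi B C f n = jacobi B C (fun j => p * f j) n := by
  simp only [jacobi, mul_add, mul_smul_comm]

/-- With `C 0` replaced by `0`, the junk term `C 0 • P (0 - 1)` vanishes and the recurrence holds
uniformly in `n`. -/
lemma X_mul_eq_jacobi_update {P : ℕ → R[X]} {B C : ℕ → R}
    (hrec0 : X * P 0 = P 1 + Polynomial.C (B 0) * P 0)
    (hrec : ∀ n, X * P (n + 1) =
      P (n + 2) + Polynomial.C (B (n + 1)) * P (n + 1) + Polynomial.C (C (n + 1)) * P n) (n : ℕ) :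
    X * P n = jacobi B (Function.update C 0 0) P n := by
  rcases n with _ | n
  · simp [jacobi, hrec0, C_mul']
  · simp [jacobi, hrec n, C_mul']

variable [IsDomain R] (P : ℕ → R[X]) (hmonic : ∀ n, (P n).Monic)
  (hdeg : ∀ n, (P n).natDegree = n)

noncomputable def monicBasis : Module.Basis ℕ R R[X] :=
  Polynomial.Sequence.basis ⟨P, fun n => by rw [degree_eq_natDegree (hmonic n).ne_zero, hdeg]⟩
    fun n => by simp only [(hmonic n).leadingCoeff, isUnit_one]

lemma monicBasis_apply (n : ℕ) : monicBasis P hmonic hdeg n = P n :=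
  Polynomial.Sequence.basis_eq_self _ _ n

lemma monicBasis_coord_apply (i j : ℕ) :
    (monicBasis P hmonic hdeg).coord i (P j) = if j = i then 1 else 0 := by
  rw [← monicBasis_apply P hmonic hdeg j, Module.Basis.coord_apply, Module.Basis.repr_self,
    Finsupp.single_apply]

end Jacobi

section AveragingOperator

variable {q : ℝ}

lemma rp_half_mul_rp_neg_half (hq : 0 < q) : rp q (1 / 2) * rp q (-(1 / 2)) = 1 := by
  rw [rp, rp, ← Complex.ofReal_mul, ← Real.rpow_add hq]
  norm_num

lemma xp_add_xm (z : ℂ) : xp q z + xm q z = 2 * alphaC q * xl z := by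
  unfold xp xm alphaC xl
  ring

lemma xp_mul_xm (hq : 0 < q) {z : ℂ} (hz : z ≠ 0) :
    xp q z * xm q z = xl z ^ 2 + alphaC q ^ 2 - 1 := by
  unfold xp xm alphaC xl
  linear_combination ((z ^ 2 + z⁻¹ ^ 2 - 2) / 4) * rp_half_mul_rp_neg_half hq +
    ((rp q (1 / 2) ^ 2 + rp q (-(1 / 2)) ^ 2 - 2) / 4) * mul_inv_cancel₀ hz

lemma exists_xl_eq (x : ℂ) : ∃ z ≠ 0, xl z = x := by
  obtain ⟨s, hs⟩ := IsAlgClosed.exists_pow_nat_eq (x ^ 2 - 1) two_pos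
  have hz : (x + s) * (x - s) = 1 := by linear_combination -hs
  refine ⟨x + s, left_ne_zero_of_mul_eq_one hz, ?_⟩
  rw [xl, inv_eq_of_mul_eq_one_right hz]
  ring

lemma eq_of_eval_xl {f g : ℂ[X]} (h : ∀ z ≠ 0, eval (xl z) f = eval (xl z) g) : f = g :=
  Polynomial.funext fun x => by
    obtain ⟨z, hz, rfl⟩ := exists_xl_eq x
    exact h z hz

lemma IsSq.add {f₁ f₂ g₁ g₂ : ℂ[X]} (h₁ : IsSq q f₁ g₁) (h₂ : IsSq q f₂ g₂) :
    IsSq q (f₁ + f₂) (g₁ + g₂) := fun z hz => by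
  simp only [eval_add, h₁ z hz, h₂ z hz]
  ring

lemma IsSq.smul (r : ℂ) {f g : ℂ[X]} (h : IsSq q f g) : IsSq q (r • f) (r • g) := fun z hz => by
  simp only [eval_smul, smul_eq_mul, h z hz]
  ring

lemma IsSq.jacobi (B C : ℕ → ℂ) {f g : ℕ → ℂ[X]} (h : ∀ n, IsSq q (f n) (g n)) (n : ℕ) :
    IsSq q (jacobi B C f n) (jacobi B C g n) :=
  ((h _).add ((h _).smul _)).add ((h _).smul _)

lemma IsSq.X_mul_X_mul (hq : 0 < q) {f g₀ g₁ g₂ : ℂ[X]} (h₀ : IsSq q f g₀)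
    (h₁ : IsSq q (X * f) g₁) (h₂ : IsSq q (X * (X * f)) g₂) :
    g₂ - (2 * alphaC q) • (X * g₁) + X * (X * g₀) + (alphaC q ^ 2 - 1) • g₀ = 0 := by
  refine eq_of_eval_xl fun z hz => ?_
  have e₁ := h₁ z hz
  have e₂ := h₂ z hz
  simp only [eval_mul, eval_X] at e₁ e₂
  simp only [eval_add, eval_sub, eval_smul, eval_mul, eval_X, eval_zero, smul_eq_mul, e₂, e₁,
    h₀ z hz]
  linear_combination
    ((xp q z * eval (xp q z) f + xm q z * eval (xm q z) f) / 2) * xp_add_xm (q := q) z -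
    ((eval (xp q z) f + eval (xm q z) f) / 2) * xp_mul_xm hq hz

end AveragingOperator

noncomputable def structRHS (sa sb sc : ℕ → ℂ) (P : ℕ → ℂ[X]) (n : ℕ) : ℂ[X] :=
  (Polynomial.C (sa n) * X + Polynomial.C (sb n)) * P n + Polynomial.C (sc n) * P (n - 1)

section StructureRelation

variable {q : ℝ} {P SP : ℕ → ℂ[X]} {B C : ℕ → ℂ} {a c : ℂ} {sa sb sc : ℕ → ℂ}

lemma jacobi_jacobi_structRHS (hq : 0 < q) (hrec : ∀ n, X * P n = jacobi B C P n)
    (hSP : ∀ n, IsSq q (P n) (SP n))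
    (hstruct : ∀ n, (Polynomial.C a * X - Polynomial.C c) * SP n = structRHS sa sb sc P n)
    (n : ℕ) :
    jacobi B C (jacobi B C (structRHS sa sb sc P)) n
      - (2 * alphaC q) • (X * jacobi B C (structRHS sa sb sc P) n)
      + X * (X * structRHS sa sb sc P n) + (alphaC q ^ 2 - 1) • structRHS sa sb sc P n = 0 := by
  have h₁ (j : ℕ) : IsSq q (X * P j) (jacobi B C SP j) := hrec j ▸ IsSq.jacobi B C hSP j
  have h₂ : IsSq q (X * (X * P n)) (jacobi B C (jacobi B C SP) n) := by
    rw [hrec n, mul_jacobi]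
    exact IsSq.jacobi B C h₁ n
  have key := IsSq.X_mul_X_mul hq (hSP n) (h₁ n) h₂
  set π := Polynomial.C a * X - Polynomial.C c
  have hQ : structRHS sa sb sc P = fun j => π * SP j := funext fun j => (hstruct j).symm
  have hJQ : jacobi B C (structRHS sa sb sc P) = fun j => π * jacobi B C SP j :=
    funext fun j => by rw [hQ, mul_jacobi]
  rw [hJQ, ← mul_jacobi, hQ]
  simp only [smul_eq_C_mul] at key ⊢
  linear_combination π * key

end StructureRelation

noncomputable def rSeq (t sa : ℕ → ℂ) (n : ℕ) : ℂ := t n + sa n - sa (n - 1)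

section Coordinates

variable {P : ℕ → ℂ[X]} (hmonic : ∀ n, (P n).Monic) (hdeg : ∀ n, (P n).natDegree = n)
  {B C : ℕ → ℂ} {α : ℂ} {sa sb sc t : ℕ → ℂ}
  (hrec : ∀ n, X * P n = jacobi B C P n)
  (hF : ∀ n, jacobi B C (jacobi B C (structRHS sa sb sc P)) n
      - (2 * α) • (X * jacobi B C (structRHS sa sb sc P) n)
      + X * (X * structRHS sa sb sc P n) + (α ^ 2 - 1) • structRHS sa sb sc P n = 0)
include hmonic hdeg hrec hF

lemma sa_recurrence (m : ℕ) : sa m - 2 * α * sa (m + 1) + sa (m + 2) = 0 := by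
  have h := congrArg ((monicBasis P hmonic hdeg).coord (m + 3)) (hF m)
  simp only [structRHS, jacobi, add_mul, mul_add, C_mul', smul_mul_assoc, mul_smul_comm, smul_add,
    hrec, smul_smul, map_add, map_sub, map_smul, map_zero, monicBasis_coord_apply, smul_eq_mul] at h
  simp (disch := omega) only [if_neg, if_true, add_assoc, Nat.reduceAdd, Nat.reduceSubDiff] at h
  linear_combination h

variable (hC : ∀ j, 1 ≤ j → C j ≠ 0) (ht : ∀ j, 1 ≤ j → sc j = C j * t j)
include hC ht

lemma t_recurrence (m : ℕ) : t (m + 1) - 2 * α * t (m + 2) + t (m + 3) = 0 := by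
  have h := congrArg ((monicBasis P hmonic hdeg).coord m) (hF (m + 3))
  simp only [structRHS, jacobi, add_mul, mul_add, C_mul', smul_mul_assoc, mul_smul_comm, smul_add,
    hrec, smul_smul, map_add, map_sub, map_smul, map_zero, monicBasis_coord_apply, smul_eq_mul] at h
  simp (disch := omega) only [if_neg, if_true, add_assoc, Nat.reduceAdd, Nat.reduceSubDiff] at h
  simp only [ht (m + 1) (by omega), ht (m + 2) (by omega), ht (m + 3) (by omega)] at h
  have hC₁₂₃ : C (m + 1) * C (m + 2) * C (m + 3) ≠ 0 :=
    mul_ne_zero (mul_ne_zero (hC _ (by omega)) (hC _ (by omega))) (hC _ (by omega))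
  refine (mul_eq_zero.mp ?_).resolve_left hC₁₂₃
  linear_combination h - C (m + 1) * C (m + 2) * C (m + 3) *
    sa_recurrence hmonic hdeg hrec hF (m + 1)

lemma rSeq_recurrence (m : ℕ) :
    rSeq t sa (m + 1) - 2 * α * rSeq t sa (m + 2) + rSeq t sa (m + 3) = 0 := by
  simp only [rSeq, Nat.add_sub_cancel, Nat.reduceSubDiff]
  linear_combination t_recurrence hmonic hdeg hrec hF hC ht m +
    sa_recurrence hmonic hdeg hrec hF (m + 1) - sa_recurrence hmonic hdeg hrec hF m

lemma rSeq_key_identity (n : ℕ) (hn : 2 ≤ n) :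
    rSeq t sa n * (B n ^ 2 - 2 * α * B n * B (n - 1) + B (n - 1) ^ 2)
      + (C (n + 1) + 2 * (1 + α) * C n + C (n - 1) + α ^ 2 - 1) * rSeq t sa n
      = (1 + 2 * α) * (C (n + 1) * rSeq t sa (n + 1) + C (n - 1) * rSeq t sa (n - 1)) := by
  obtain ⟨m, rfl⟩ : ∃ m, n = m + 2 := ⟨n - 2, by omega⟩
  -- The `b_j` enter both coefficients through
  -- `(B n + B (n-1)) (b n + b (n-1)) - 2α (B n b n + B (n-1) b (n-1))`, so they cancel in `h₁ - C n h₂`.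
  have h₁ := congrArg ((monicBasis P hmonic hdeg).coord (m + 1)) (hF (m + 2))
  have h₂ := congrArg ((monicBasis P hmonic hdeg).coord (m + 2)) (hF (m + 1))
  simp only [structRHS, jacobi, add_mul, mul_add, C_mul', smul_mul_assoc, mul_smul_comm, smul_add,
    hrec, smul_smul, map_add, map_sub, map_smul, map_zero, monicBasis_coord_apply,
    smul_eq_mul] at h₁ h₂
  simp (disch := omega) only [if_neg, if_true, add_assoc, Nat.reduceAdd, Nat.reduceSubDiff] at h₁ h₂
  simp only [ht (m + 1) (by omega), ht (m + 2) (by omega), ht (m + 3) (by omega)] at h₁ h₂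
  simp only [rSeq, add_assoc, Nat.reduceAdd, Nat.reduceSubDiff]
  refine mul_left_cancel₀ (hC (m + 2) (by omega)) ?_
  linear_combination h₁ - C (m + 2) * h₂

end Coordinates

theorem stmt3_general (q : ℝ) (hq0 : 0 < q)
    (P : ℕ → Polynomial ℂ) (B C : ℕ → ℂ)
    (hmonic : ∀ n, (P n).Monic) (hdeg : ∀ n, (P n).natDegree = n)
    (hCne : ∀ n, 1 ≤ n → C n ≠ 0)
    (hrec0 : Polynomial.X * P 0 = P 1 + Polynomial.C (B 0) * P 0)
    (hrec : ∀ n : ℕ, Polynomial.X * P (n + 1) =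
      P (n + 2) + Polynomial.C (B (n + 1)) * P (n + 1) + Polynomial.C (C (n + 1)) * P n)
    (a c : ℂ) (sa sb sc : ℕ → ℂ)
    (SP : ℕ → Polynomial ℂ) (hSP : ∀ n, IsSq q (P n) (SP n))
    (hstruct : ∀ n : ℕ, (Polynomial.C a * Polynomial.X - Polynomial.C c) * SP n =
      (Polynomial.C (sa n) * Polynomial.X + Polynomial.C (sb n)) * P n
        + Polynomial.C (sc n) * P (n - 1)) :
    ∀ n : ℕ, 3 ≤ n →
      (sc (n) / C (n) + sa (n) - sa (n - 1)) * (B n ^ 2 - 2 * alphaC q * B n * B (n - 1) + B (n - 1) ^ 2) =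
        ((sc (n + 1) / C (n + 1) + sa (n + 1) - sa (n + 1 - 1)) + (sc (n + 2) / C (n + 2) + sa (n + 2) - sa (n + 2 - 1))) * (C (n + 1) - 1/4)
          - 2 * (1 + alphaC q) * (sc (n) / C (n) + sa (n) - sa (n - 1)) * (C n - 1/4)
          + ((sc (n - 1) / C (n - 1) + sa (n - 1) - sa (n - 1 - 1)) + (sc (n - 2) / C (n - 2) + sa (n - 2) - sa (n - 2 - 1))) * (C (n - 1) - 1/4) := by
  intro n hn
  have hrec' := X_mul_eq_jacobi_update hrec0 hrec
  have hF := jacobi_jacobi_structRHS hq0 hrec' hSP hstruct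
  have hC : ∀ j, 1 ≤ j → Function.update C 0 0 j ≠ 0 := fun j hj => by
    rw [Function.update_of_ne (by omega)]
    exact hCne j hj
  have ht : ∀ j, 1 ≤ j → sc j = Function.update C 0 0 j * (sc j / C j) := fun j hj => by
    rw [Function.update_of_ne (by omega), mul_div_cancel₀ _ (hCne j hj)]
  have key := rSeq_key_identity hmonic hdeg hrec' hF hC ht n (by omega)
  have hr := rSeq_recurrence hmonic hdeg hrec' hF hC ht
  obtain ⟨k, rfl⟩ : ∃ k, n = k + 3 := ⟨n - 3, by omega⟩
  have hr₁ := hr k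
  have hr₂ := hr (k + 1)
  have hr₃ := hr (k + 2)
  simp only [rSeq, Function.update_apply, add_assoc, Nat.reduceAdd, Nat.reduceSubDiff,
    Nat.add_eq_zero_iff, OfNat.ofNat_ne_zero, and_false, if_false] at key hr₁ hr₂ hr₃ ⊢
  linear_combination key - (C (k + 4) - 1 / 4) * hr₃ + (1 / 4 + alphaC q / 2) * hr₂
    - (C (k + 2) - 1 / 4) * hr₁

theorem stmt3 (q : ℝ) (hq0 : 0 < q) (hq1 : q < 1)
    (P : ℕ → Polynomial ℂ) (B C : ℕ → ℂ)
    (hmonic : ∀ n, (P n).Monic) (hdeg : ∀ n, (P n).natDegree = n)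
    (hCne : ∀ n, 1 ≤ n → C n ≠ 0)
    (hrec0 : Polynomial.X * P 0 = P 1 + Polynomial.C (B 0) * P 0)
    (hrec : ∀ n : ℕ, Polynomial.X * P (n + 1) =
      P (n + 2) + Polynomial.C (B (n + 1)) * P (n + 1) + Polynomial.C (C (n + 1)) * P n)
    (a c : ℂ) (sa sb sc : ℕ → ℂ) (hc0 : sc 0 = 0)
    (SP : ℕ → Polynomial ℂ) (hSP : ∀ n, IsSq q (P n) (SP n))
    (hstruct : ∀ n : ℕ, (Polynomial.C a * Polynomial.X - Polynomial.C c) * SP n =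
      (Polynomial.C (sa n) * Polynomial.X + Polynomial.C (sb n)) * P n
        + Polynomial.C (sc n) * P (n - 1)) :
    ∀ n : ℕ, 3 ≤ n →
      (sc (n) / C (n) + sa (n) - sa (n - 1)) * (B n ^ 2 - 2 * alphaC q * B n * B (n - 1) + B (n - 1) ^ 2) =
        ((sc (n + 1) / C (n + 1) + sa (n + 1) - sa (n + 1 - 1)) + (sc (n + 2) / C (n + 2) + sa (n + 2) - sa (n + 2 - 1))) * (C (n + 1) - 1/4)
          - 2 * (1 + alphaC q) * (sc (n) / C (n) + sa (n) - sa (n - 1)) * (C n - 1/4)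
          + ((sc (n - 1) / C (n - 1) + sa (n - 1) - sa (n - 1 - 1)) + (sc (n - 2) / C (n - 2) + sa (n - 2) - sa (n - 2 - 1))) * (C (n - 1) - 1/4) :=
  stmt3_general q hq0 P B C hmonic hdeg hCne hrec0 hrec a c sa sb sc SP hSP hstruct
end

section
/- Let T̂_n denote the monic Chebyshev polynomials of the first kind and let c ∈ ℂ. Then for every n ≥ 2: (X − c)·S_q T̂_n = α_n·(T̂_{n+1} − c·T̂_n + (1/4)·T̂_{n−1}) as polynomials in ℂ[X]. -/
/-!
Writing `x = x(z)`, the points `x₊(z)` and `x₋(z)` are `x(q^{1/2} z)` and `x(q^{-1/2} z)`, and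
`T̂_n(x(z)) = (zⁿ + z⁻ⁿ)/2ⁿ`. Averaging these two values multiplies `T̂_n(x(z))` by `α_n`, and since
`x` maps `ℂˣ` onto `ℂ`, a polynomial is determined by its values at the points `x(z)`; hence
`S_q T̂_n = α_n T̂_n`. The claim is then the three-term recurrence `X T̂_n = T̂_{n+1} + T̂_{n-1}/4`,
valid for `n ≥ 2`, multiplied by `α_n`.
-/

open Polynomial

lemma exists_ne_zero_xl_eq (w : ℂ) : ∃ z ≠ 0, xl z = w := by
  obtain ⟨s, hs⟩ := IsAlgClosed.exists_eq_mul_self (w ^ 2 - 1)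
  have hprod : (w + s) * (w - s) = 1 := by linear_combination hs
  refine ⟨w + s, left_ne_zero_of_mul_eq_one hprod, ?_⟩
  rw [xl, inv_eq_of_mul_eq_one_right hprod]
  ring

lemma Polynomial.eq_of_eval_xl_eq {f g : ℂ[X]} (h : ∀ z ≠ 0, f.eval (xl z) = g.eval (xl z)) :
    f = g := by
  refine Polynomial.funext fun w => ?_
  obtain ⟨z, hz, rfl⟩ := exists_ne_zero_xl_eq w
  exact h z hz

lemma IsSq.unique {q : ℝ} {f g g' : ℂ[X]} (hg : IsSq q f g) (hg' : IsSq q f g') : g = g' :=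
  Polynomial.eq_of_eval_xl_eq fun z hz => (hg z hz).trans (hg' z hz).symm

section Chebyshev

variable {z : ℂ} (hz : z ≠ 0)
include hz

lemma chebyshev_T_eval_xl (n : ℕ) :
    (Chebyshev.T ℂ n).eval (xl z) = (z ^ n + z⁻¹ ^ n) / 2 := by
  induction n using Nat.twoStepInduction with
  | zero => norm_num
  | one => simp [xl]
  | more n ih ih' =>
    have hT := Chebyshev.T_add_two ℂ n
    push_cast at ih' ⊢
    rw [hT, eval_sub, eval_mul, eval_mul, eval_X, ih, ih', xl]
    simp only [eval_ofNat]
    linear_combination (z ^ n + z⁻¹ ^ n) / 2 * mul_inv_cancel₀ hz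

lemma chebM_eval_xl {n : ℕ} (hn : n ≠ 0) :
    (chebM n).eval (xl z) = (z ^ n + z⁻¹ ^ n) / 2 ^ n := by
  rw [chebM, if_neg hn, eval_smul, chebyshev_T_eval_xl hz, smul_eq_mul,
    zpow_sub₀ two_ne_zero, zpow_one, zpow_natCast]
  field_simp

end Chebyshev

lemma X_mul_chebM {n : ℕ} (hn : n ≠ 0) :
    X * chebM (n + 1) = chebM (n + 2) + C (1 / 4 : ℂ) * chebM n := by
  refine Polynomial.eq_of_eval_xl_eq fun z hz => ?_
  rw [eval_mul, eval_add, eval_mul, eval_X, eval_C, chebM_eval_xl hz hn,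
    chebM_eval_xl hz n.add_one_ne_zero, chebM_eval_xl hz (n + 1).add_one_ne_zero, xl,
    inv_pow, inv_pow, inv_pow]
  field_simp
  ring

section Averaging

variable {q : ℝ} (hq : 0 < q)
include hq

lemma rp_add (a b : ℝ) : rp q (a + b) = rp q a * rp q b := by
  rw [rp, rp, rp, Real.rpow_add hq, Complex.ofReal_mul]

lemma rp_ne_zero (a : ℝ) : rp q a ≠ 0 :=
  Complex.ofReal_ne_zero.mpr (Real.rpow_pos_of_pos hq a).ne'

lemma rp_neg (a : ℝ) : rp q (-a) = (rp q a)⁻¹ :=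
  eq_inv_of_mul_eq_one_left <| by rw [← rp_add hq, neg_add_cancel, rp, Real.rpow_zero,
    Complex.ofReal_one]

lemma rp_pow (a : ℝ) (n : ℕ) : rp q a ^ n = rp q (n * a) := by
  rw [rp, rp, ← Complex.ofReal_pow, ← Real.rpow_natCast, ← Real.rpow_mul hq.le, mul_comm]

lemma xp_eq_xl (z : ℂ) : xp q z = xl (rp q (1 / 2) * z) := by
  rw [xp, xl, mul_inv, rp_neg hq]

lemma xm_eq_xl (z : ℂ) : xm q z = xl (rp q (-(1 / 2)) * z) := by
  rw [xm, xl, mul_inv, rp_neg hq, inv_inv, add_comm]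

lemma isSq_chebM {n : ℕ} (hn : n ≠ 0) : IsSq q (chebM n) (C (alphaN q n) * chebM n) := by
  intro z hz
  have hpow (s : ℝ) : rp q s ^ n = rp q (n * s) := rp_pow hq s n
  rw [xp_eq_xl hq, xm_eq_xl hq, eval_mul, eval_C, chebM_eval_xl hz hn,
    chebM_eval_xl (mul_ne_zero (rp_ne_zero hq _) hz) hn,
    chebM_eval_xl (mul_ne_zero (rp_ne_zero hq _) hz) hn, mul_inv, mul_inv, ← rp_neg hq,
    ← rp_neg hq, neg_neg, mul_pow, mul_pow, mul_pow, mul_pow, hpow, hpow, alphaN]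
  ring_nf

end Averaging

theorem stmt13_general (q : ℝ) (hq0 : 0 < q) (c : ℂ) :
    ∀ n : ℕ, 2 ≤ n → ∀ S : Polynomial ℂ, IsSq q (chebM n) S →
      (Polynomial.X - Polynomial.C c) * S =
        Polynomial.C (alphaN q n) *
          (chebM (n + 1) - Polynomial.C c * chebM n + Polynomial.C (1/4 : ℂ) * chebM (n - 1)) := by
  intro n hn S hS
  obtain ⟨m, rfl⟩ : ∃ m, n = m + 1 + 1 := ⟨n - 2, by omega⟩
  rw [← (isSq_chebM hq0 (m + 1).add_one_ne_zero).unique hS, Nat.add_sub_cancel]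
  linear_combination C (alphaN q (m + 2)) * X_mul_chebM m.add_one_ne_zero

theorem stmt13 (q : ℝ) (hq0 : 0 < q) (hq1 : q < 1) (c : ℂ) :
    ∀ n : ℕ, 2 ≤ n → ∀ S : Polynomial ℂ, IsSq q (chebM n) S →
      (Polynomial.X - Polynomial.C c) * S =
        Polynomial.C (alphaN q n) *
          (chebM (n + 1) - Polynomial.C c * chebM n + Polynomial.C (1/4 : ℂ) * chebM (n - 1)) :=
  stmt13_general q hq0 c
end
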